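/- arXiv:1402.2746 — 3 statements merged into one kernel-verified Lean document; each statement's English description precedes it below -/
import Mathlib

section
/- There is an absolute constant C > 0 such that for all real M ≥ 1, all real U, T with 0 ≤ U ≤ √M and 0 ≤ T ≤ √M, all real Ξ with 0 ≤ Ξ ≤ M, all positive integers m, n, k, and either choice of sign ±, one has |∫_M^{M+Ξ} x^{1/2}·e(±(2√(m(x+T))/k + 2√(n(x+U))/k)) dx| ≤ C·k·M/(√m + √n). -/
open Complex MeasureTheory

/-- `e(t) = exp(2πit)`. -/
noncomputable def e (t : ℝ) : ℂ := Complex.exp (2 * Real.pi * Complex.I * t)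

open Set

/-!
First derivative test. With the phase `φ(x) = 2(√m √(x+T) + √n √(x+U))/k` one has
`√x e(sφ) = (h / 2πis) (e(sφ))'` for the amplitude `h = √x / φ'`, which is nonnegative and
increasing because `φ'` is positive and decreasing. Integrating by parts over `[a, b]` with
`a = M`, `b = M + Ξ`, the boundary terms contribute at most `h(a) + h(b)` and the remaining
integral of `h' e(sφ)` at most `h(b) - h(a)`, so the integral is at most `h(b) / π`.
Since `b ≤ 2M` and `T, U ≤ √M ≤ M`, `φ'(b) ≥ (√m + √n) / (k √(3M))`, whence
`h(b) ≤ √6 k M / (√m + √n) ≤ 3 k M / (√m + √n)`, and `3 < π` gives the constant `C = 1`.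
-/

theorem norm_e (t : ℝ) : ‖e t‖ = 1 := by
  simp [e, norm_exp]

theorem continuous_e : Continuous e := by
  unfold e; fun_prop

theorem HasDerivAt.e_comp {f : ℝ → ℝ} {f' x : ℝ} (hf : HasDerivAt f f' x) :
    HasDerivAt (fun y => e (f y)) (2 * Real.pi * I * f' * e (f x)) x := by
  unfold e
  convert (hf.ofReal_comp.const_mul (2 * Real.pi * I)).cexp using 1
  ring

theorem norm_integral_mul_deriv_le_of_monotoneOn {a b : ℝ} {h : ℝ → ℝ} {v v' : ℝ → ℂ}
    (hab : a ≤ b) (hh : ∀ x ∈ Icc a b, DifferentiableAt ℝ h x) (hmono : MonotoneOn h (Icc a b))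
    (ha : 0 ≤ h a) (hv : ∀ x ∈ Icc a b, HasDerivAt v (v' x) x)
    (hv' : IntervalIntegrable v' volume a b) (hv1 : ∀ x ∈ Icc a b, ‖v x‖ ≤ 1) :
    ‖∫ x in a..b, (h x : ℂ) * v' x‖ ≤ 2 * h b := by
  have hIcc : uIcc a b = Icc a b := uIcc_of_le hab
  have hderiv : IntervalIntegrable (deriv h) volume a b :=
    (hIcc ▸ hmono).intervalIntegrable_deriv
  have hderiv_nonneg : ∀ x ∈ Ioc a b, 0 ≤ deriv h x := fun x hx => by
    have hx' : x ∈ Icc a b := Ioc_subset_Icc_self hx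
    rw [← (hh x hx').derivWithin (uniqueDiffOn_Icc (hx.1.trans_le hx.2) x hx')]
    exact hmono.derivWithin_nonneg
  have hparts := intervalIntegral.integral_mul_deriv_eq_deriv_mul
    (u' := fun x => ((deriv h x : ℝ) : ℂ)) (fun x hx => (hh x (hIcc ▸ hx)).hasDerivAt.ofReal_comp)
    (fun x hx => hv x (hIcc ▸ hx)) ⟨hderiv.1.ofReal, hderiv.2.ofReal⟩ hv'
  have hrest : ‖∫ x in a..b, ((deriv h x : ℝ) : ℂ) * v x‖ ≤ h b - h a := by
    rw [← intervalIntegral.integral_deriv_eq_sub (hIcc ▸ hh) hderiv]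
    refine intervalIntegral.norm_integral_le_of_norm_le hab (.of_forall fun x hx => ?_) hderiv
    rw [norm_mul, norm_real, Real.norm_of_nonneg (hderiv_nonneg x hx)]
    exact mul_le_of_le_one_right (hderiv_nonneg x hx) (hv1 x (Ioc_subset_Icc_self hx))
  have hend : ∀ x ∈ Icc a b, ‖(h x : ℂ) * v x‖ ≤ h x := fun x hx => by
    have : 0 ≤ h x := ha.trans (hmono (left_mem_Icc.2 hab) hx hx.1)
    rw [norm_mul, norm_real, Real.norm_of_nonneg this]
    exact mul_le_of_le_one_right this (hv1 x hx)
  rw [hparts]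
  calc _ ≤ ‖(h b : ℂ) * v b‖ + ‖(h a : ℂ) * v a‖ + ‖∫ x in a..b, ((deriv h x : ℝ) : ℂ) * v x‖ :=
        norm_sub_le_of_le (norm_sub_le _ _) le_rfl
    _ ≤ h b + h a + (h b - h a) := by
        gcongr
        exacts [hend b (right_mem_Icc.2 hab), hend a (left_mem_Icc.2 hab)]
    _ = 2 * h b := by ring

theorem norm_integral_mul_e_le {a b s : ℝ} {g φ φ' : ℝ → ℝ} (hab : a ≤ b) (hs : s ≠ 0)
    (hφ : ∀ x ∈ Icc a b, HasDerivAt φ (φ' x) x) (hφ' : ContinuousOn φ' (Icc a b))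
    (hφ'0 : ∀ x ∈ Icc a b, φ' x ≠ 0)
    (hd : ∀ x ∈ Icc a b, DifferentiableAt ℝ (fun y => g y / φ' y) x)
    (hmono : MonotoneOn (fun y => g y / φ' y) (Icc a b)) (ha : 0 ≤ g a / φ' a) :
    ‖∫ x in a..b, (g x : ℂ) * e (s * φ x)‖ ≤ g b / φ' b / (Real.pi * |s|) := by
  have hIcc : uIcc a b = Icc a b := uIcc_of_le hab
  set c : ℂ := 2 * Real.pi * I * s
  have hc : ‖c‖ = 2 * Real.pi * |s| := by simp [c, abs_of_pos Real.pi_pos]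
  have hc0 : c ≠ 0 := by simp [c, hs, Real.pi_ne_zero]
  have hv (x) (hx : x ∈ Icc a b) :
      HasDerivAt (fun y => e (s * φ y)) (c * φ' x * e (s * φ x)) x := by
    convert ((hφ x hx).const_mul s).e_comp using 1
    simp only [c]; push_cast; ring
  have hv' : IntervalIntegrable (fun x => c * φ' x * e (s * φ x)) volume a b := by
    refine ContinuousOn.intervalIntegrable (hIcc ▸ ?_)
    have hφc : ContinuousOn φ (Icc a b) := fun x hx => (hφ x hx).continuousAt.continuousWithinAt
    exact (continuousOn_const.mul (continuous_ofReal.comp_continuousOn hφ')).mul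
      (continuous_e.comp_continuousOn (continuousOn_const.mul hφc))
  have hintegrand : ∀ x ∈ uIcc a b, (g x : ℂ) * e (s * φ x) =
      c⁻¹ * (((g x / φ' x : ℝ) : ℂ) * (c * φ' x * e (s * φ x))) := fun x hx => by
    have : (φ' x : ℂ) ≠ 0 := ofReal_ne_zero.2 (hφ'0 x (hIcc ▸ hx))
    push_cast; field_simp
  rw [intervalIntegral.integral_congr hintegrand, intervalIntegral.integral_const_mul, norm_mul,
    norm_inv, hc]
  calc _ ≤ (2 * Real.pi * |s|)⁻¹ * (2 * (g b / φ' b)) := by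
        gcongr
        exact norm_integral_mul_deriv_le_of_monotoneOn hab hd hmono ha hv hv'
          fun x _ => (norm_e _).le
    _ = _ := by field_simp

noncomputable def sqrtPhase (α β κ T U x : ℝ) : ℝ :=
  2 * (α * √(x + T)) / κ + 2 * (β * √(x + U)) / κ

noncomputable def sqrtPhaseDeriv (α β κ T U x : ℝ) : ℝ :=
  (α / √(x + T) + β / √(x + U)) / κ

section
variable {α β κ T U : ℝ}

theorem hasDerivAt_sqrtPhase (hT : 0 ≤ T) (hU : 0 ≤ U) {x : ℝ} (hx : 0 < x) :
    HasDerivAt (sqrtPhase α β κ T U) (sqrtPhaseDeriv α β κ T U x) x := by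
  have hsT : √(x + T) ≠ 0 := (Real.sqrt_pos.2 (by linarith)).ne'
  have hsU : √(x + U) ≠ 0 := (Real.sqrt_pos.2 (by linarith)).ne'
  have hT' := ((((hasDerivAt_id' x).add_const T).sqrt (by linarith)).const_mul α).const_mul 2
  have hU' := ((((hasDerivAt_id' x).add_const U).sqrt (by linarith)).const_mul β).const_mul 2
  unfold sqrtPhase sqrtPhaseDeriv
  refine ((hT'.div_const κ).add (hU'.div_const κ)).congr_deriv ?_
  field_simp

theorem continuousOn_sqrtPhaseDeriv (hT : 0 ≤ T) (hU : 0 ≤ U) :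
    ContinuousOn (sqrtPhaseDeriv α β κ T U) (Ioi 0) := by
  have hne {c : ℝ} (hc : 0 ≤ c) : ∀ x ∈ Ioi (0 : ℝ), √(x + c) ≠ 0 := fun x hx =>
    (Real.sqrt_pos.2 (by linarith [mem_Ioi.1 hx])).ne'
  exact ((continuousOn_const.div (by fun_prop) (hne hT)).add
    (continuousOn_const.div (by fun_prop) (hne hU))).div_const κ

theorem sqrtPhaseDeriv_pos (hα : 0 < α) (hβ : 0 < β) (hκ : 0 < κ) (hT : 0 ≤ T) (hU : 0 ≤ U)
    {x : ℝ} (hx : 0 < x) : 0 < sqrtPhaseDeriv α β κ T U x := by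
  have : 0 < √(x + T) := Real.sqrt_pos.2 (by linarith)
  have : 0 < √(x + U) := Real.sqrt_pos.2 (by linarith)
  unfold sqrtPhaseDeriv
  positivity

theorem antitoneOn_sqrtPhaseDeriv (hα : 0 ≤ α) (hβ : 0 ≤ β) (hκ : 0 ≤ κ) (hT : 0 ≤ T)
    (hU : 0 ≤ U) : AntitoneOn (sqrtPhaseDeriv α β κ T U) (Ioi 0) := by
  intro x hx y hy hxy
  simp only [mem_Ioi] at hx hy
  have : 0 < √(x + T) := Real.sqrt_pos.2 (by linarith)
  have : 0 < √(x + U) := Real.sqrt_pos.2 (by linarith)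
  unfold sqrtPhaseDeriv
  gcongr

theorem monotoneOn_sqrt_div_sqrtPhaseDeriv (hα : 0 < α) (hβ : 0 < β) (hκ : 0 < κ) (hT : 0 ≤ T)
    (hU : 0 ≤ U) : MonotoneOn (fun x => √x / sqrtPhaseDeriv α β κ T U x) (Ioi 0) := by
  intro x hx y hy hxy
  have := sqrtPhaseDeriv_pos hα hβ hκ hT hU hy
  have := antitoneOn_sqrtPhaseDeriv hα.le hβ.le hκ.le hT hU hx hy hxy
  dsimp only
  gcongr

theorem differentiableAt_sqrt_div_sqrtPhaseDeriv (hα : 0 < α) (hβ : 0 < β) (hκ : 0 < κ)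
    (hT : 0 ≤ T) (hU : 0 ≤ U) {x : ℝ} (hx : 0 < x) :
    DifferentiableAt ℝ (fun y => √y / sqrtPhaseDeriv α β κ T U y) x := by
  have : x + T ≠ 0 := by positivity
  have : x + U ≠ 0 := by positivity
  have : √(x + T) ≠ 0 := (Real.sqrt_pos.2 (by linarith)).ne'
  have : √(x + U) ≠ 0 := (Real.sqrt_pos.2 (by linarith)).ne'
  refine (differentiableAt_id.sqrt hx.ne').div ?_ (sqrtPhaseDeriv_pos hα hβ hκ hT hU hx).ne'
  unfold sqrtPhaseDeriv
  fun_prop (disch := assumption)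

theorem sqrt_div_sqrtPhaseDeriv_le (hα : 0 < α) (hβ : 0 < β) (hκ : 0 < κ) (hT : 0 ≤ T)
    (hU : 0 ≤ U) {M x : ℝ} (hx : 0 < x) (hxM : x ≤ 2 * M) (hTM : T ≤ M) (hUM : U ≤ M) :
    √x / sqrtPhaseDeriv α β κ T U x ≤ 3 * κ * M / (α + β) := by
  have hM : 0 < M := by linarith
  have hT3 : √(x + T) ≤ √(3 * M) := Real.sqrt_le_sqrt (by linarith)
  have hU3 : √(x + U) ≤ √(3 * M) := Real.sqrt_le_sqrt (by linarith)
  have : 0 < √(x + T) := Real.sqrt_pos.2 (by linarith)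
  have : 0 < √(x + U) := Real.sqrt_pos.2 (by linarith)
  have hlower : (α + β) / (κ * √(3 * M)) ≤ sqrtPhaseDeriv α β κ T U x := by
    calc (α + β) / (κ * √(3 * M)) = (α / √(3 * M) + β / √(3 * M)) / κ := by field_simp
      _ ≤ _ := by rw [sqrtPhaseDeriv]; gcongr
  have hsqrt6 : √(2 * M) * √(3 * M) ≤ 3 * M := by
    rw [← Real.sqrt_mul (by positivity)]
    exact Real.sqrt_le_iff.2 ⟨by positivity, by nlinarith⟩
  calc √x / sqrtPhaseDeriv α β κ T U x ≤ √(2 * M) / ((α + β) / (κ * √(3 * M))) := by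
        gcongr
    _ = κ * (√(2 * M) * √(3 * M)) / (α + β) := by field_simp
    _ ≤ κ * (3 * M) / (α + β) := by gcongr
    _ = 3 * κ * M / (α + β) := by ring
end

theorem mean_square_lemma_one :
    ∃ C : ℝ, 0 < C ∧ ∀ M U T Ξ : ℝ, 1 ≤ M → 0 ≤ U → U ≤ Real.sqrt M → 0 ≤ T →
      T ≤ Real.sqrt M → 0 ≤ Ξ → Ξ ≤ M → ∀ m n k : ℕ, 0 < m → 0 < n → 0 < k →
      ∀ s : ℝ, s = 1 ∨ s = -1 →
        ‖(∫ x in M..(M + Ξ), ((x ^ ((1:ℝ)/2) : ℝ) : ℂ) *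
            e (s * (2 * Real.sqrt (m * (x + T)) / k + 2 * Real.sqrt (n * (x + U)) / k)))‖ ≤
          C * k * M / (Real.sqrt m + Real.sqrt n) := by
  refine ⟨1, one_pos, fun M U T Ξ hM hU hUM hT hTM hΞ0 hΞ m n k hm hn hk s hs => ?_⟩
  have hs0 : s ≠ 0 := by rcases hs with rfl | rfl <;> norm_num
  have hs1 : |s| = 1 := by rcases hs with rfl | rfl <;> norm_num
  have hα : 0 < √(m : ℝ) := Real.sqrt_pos.2 (by exact_mod_cast hm)
  have hβ : 0 < √(n : ℝ) := Real.sqrt_pos.2 (by exact_mod_cast hn)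
  have hκ : (0 : ℝ) < k := by exact_mod_cast hk
  have hsqrtM : √M ≤ M := Real.sqrt_le_self_iff.2 (Or.inr hM)
  have hpos : Icc M (M + Ξ) ⊆ Ioi 0 := fun x hx => lt_of_lt_of_le (by linarith) hx.1
  have hintegrand : ∀ x ∈ uIcc M (M + Ξ), ((x ^ ((1:ℝ)/2) : ℝ) : ℂ) *
      e (s * (2 * √(m * (x + T)) / k + 2 * √(n * (x + U)) / k)) =
      (√x : ℂ) * e (s * sqrtPhase √m √n k T U x) := fun x _ => by
    rw [← Real.sqrt_eq_rpow, sqrtPhase, Real.sqrt_mul (Nat.cast_nonneg m),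
      Real.sqrt_mul (Nat.cast_nonneg n)]
  rw [intervalIntegral.integral_congr hintegrand]
  calc _ ≤ √(M + Ξ) / sqrtPhaseDeriv √m √n k T U (M + Ξ) / (Real.pi * |s|) :=
        norm_integral_mul_e_le (by linarith) hs0
          (fun x hx => hasDerivAt_sqrtPhase hT hU (hpos hx))
          ((continuousOn_sqrtPhaseDeriv hT hU).mono hpos)
          (fun x hx => (sqrtPhaseDeriv_pos hα hβ hκ hT hU (hpos hx)).ne')
          (fun x hx => differentiableAt_sqrt_div_sqrtPhaseDeriv hα hβ hκ hT hU (hpos hx))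
          ((monotoneOn_sqrt_div_sqrtPhaseDeriv hα hβ hκ hT hU).mono hpos)
          (div_nonneg (Real.sqrt_nonneg _) (sqrtPhaseDeriv_pos hα hβ hκ hT hU (by linarith)).le)
    _ ≤ 3 * (k * M / (√m + √n)) / Real.pi := by
        rw [hs1, mul_one, ← mul_div_assoc, ← mul_assoc]
        gcongr ?_ / _
        exact sqrt_div_sqrtPhaseDeriv_le hα hβ hκ hT hU (by linarith) (by linarith)
          (hTM.trans hsqrtM) (hUM.trans hsqrtM)
    _ ≤ 1 * k * M / (√m + √n) := by
        rw [div_le_iff₀ Real.pi_pos, one_mul, mul_div_assoc, mul_comm _ Real.pi]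
        gcongr
        exact Real.pi_gt_three.le
end

section
/- There is an absolute constant C > 0 such that for all real M ≥ 1, all real T with 0 < T ≤ √M, all real Ξ with 0 ≤ Ξ ≤ M, all positive integers m, n, k with m < n and m ≤ M/(2T), and either choice of sign ±, one has |∫_M^{M+Ξ} x^{1/2}·e(±(2√(mx)/k − 2√(n(x+T))/k)) dx| ≤ C·k·√n·M/(n − m). -/
/-! The phase `φ x = c * (2√(m x) - 2√(n (x + T)))`, `c = 2πs/k`, has derivative `-c * D x` with
`D x = √n / √(x + T) - √m / √x`. On `[M, 2M]` the conditions `T ≤ x` and `2mT ≤ x` give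
`n / (x + T) - m / x ≥ (n - m) / (4x)`, hence `D x ≥ (n - m) / (8 √(n x))`. Writing the amplitude
as `√x = h φ'` with `h = -√x / (c D)` and integrating by parts, the integral is at most `|h|` at
the two endpoints plus `∫ |h'|`; both `√x / D = O(√n x / (n - m))` and its derivative
`O(√n / (n - m))` follow from the lower bound on `D` (the derivative also uses `nT ≤ 3(n - m)x/2`). -/

open Complex MeasureTheory

open Set intervalIntegral

theorem norm_integral_mul_exp_mul_I_le_of_eq_mul_deriv {a b K : ℝ} {g h h' φ φ' : ℝ → ℝ}
    (hh : ∀ x ∈ uIcc a b, HasDerivAt h (h' x) x) (hφ : ∀ x ∈ uIcc a b, HasDerivAt φ (φ' x) x)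
    (hh'c : ContinuousOn h' (uIcc a b)) (hφ'c : ContinuousOn φ' (uIcc a b))
    (hg : ∀ x ∈ uIcc a b, g x = h x * φ' x) (hK : ∀ x ∈ uIcc a b, |h' x| ≤ K) :
    ‖∫ x in a..b, (g x : ℂ) * exp (φ x * I)‖ ≤ |h a| + |h b| + K * |b - a| := by
  have hexp : ∀ x ∈ uIcc a b, HasDerivAt (fun y => -I * exp (φ y * I))
      (φ' x * exp (φ x * I)) x := fun x hx => by
    refine ((((hφ x hx).ofReal_comp.mul_const I).cexp).const_mul (-I)).congr_deriv ?_
    linear_combination (-(φ' x : ℂ) * exp ((φ x : ℂ) * I)) * Complex.I_sq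
  have hcont : ContinuousOn (fun x => exp (φ x * I)) (uIcc a b) :=
    continuous_exp.comp_continuousOn <|
      (continuous_ofReal.comp_continuousOn fun x hx =>
        (hφ x hx).continuousAt.continuousWithinAt).mul continuousOn_const
  have hparts := integral_mul_deriv_eq_deriv_mul (fun x hx => (hh x hx).ofReal_comp) hexp
    ((continuous_ofReal.comp_continuousOn hh'c).intervalIntegrable)
    (((continuous_ofReal.comp_continuousOn hφ'c).mul hcont).intervalIntegrable)
  have hrem : ‖∫ x in a..b, (h' x : ℂ) * (-I * exp (φ x * I))‖ ≤ K * |b - a| :=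
    norm_integral_le_of_norm_le_const fun x hx => by
      simpa [norm_exp_ofReal_mul_I] using hK x (uIoc_subset_uIcc hx)
  rw [integral_congr (g := fun x => (h x : ℂ) * (φ' x * exp (φ x * I))) fun x hx => by
    simp only [hg x hx, ofReal_mul, mul_assoc]]
  calc _ = ‖(h b : ℂ) * (-I * exp (φ b * I)) - (h a : ℂ) * (-I * exp (φ a * I))
        - ∫ x in a..b, (h' x : ℂ) * (-I * exp (φ x * I))‖ := by rw [hparts]
    _ ≤ |h b| + |h a| + K * |b - a| := by
        refine (norm_sub_le _ _).trans (add_le_add ((norm_sub_le _ _).trans ?_) hrem)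
        simp [norm_exp_ofReal_mul_I]
    _ = _ := by ring

noncomputable def freqGap (m n T x : ℝ) : ℝ := √n / √(x + T) - √m / √x

section freqGap

variable {m n T x : ℝ}

theorem hasDerivAt_two_sqrt_mul_sub_two_sqrt_mul (hm : 0 ≤ m) (hn : 0 ≤ n) (hx : 0 < x)
    (hxT : 0 < x + T) :
    HasDerivAt (fun y => 2 * √(m * y) - 2 * √(n * (y + T))) (-freqGap m n T x) x := by
  simp_rw [Real.sqrt_mul hm, Real.sqrt_mul hn]
  refine ((((Real.hasDerivAt_sqrt hx.ne').const_mul √m).const_mul 2).sub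
    ((((hasDerivAt_id x).add_const T).sqrt hxT.ne').const_mul √n |>.const_mul 2)).congr_deriv ?_
  have : √x ≠ 0 := by positivity
  have : √(x + T) ≠ 0 := by positivity
  simp only [id, freqGap]
  field_simp
  ring

theorem hasDerivAt_freqGap (hx : 0 < x) (hxT : 0 < x + T) :
    HasDerivAt (freqGap m n T) (√m / (2 * x * √x) - √n / (2 * (x + T) * √(x + T))) x := by
  have hsx := (hasDerivAt_id x).sqrt hx.ne'
  have hsxT := ((hasDerivAt_id x).add_const T).sqrt hxT.ne'
  refine (((hasDerivAt_const x √n).div hsxT (by positivity)).sub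
    ((hasDerivAt_const x √m).div hsx (by positivity))).congr_deriv ?_
  have hs := Real.sq_sqrt hx.le
  have hq := Real.sq_sqrt hxT.le
  have hs0 : √x ≠ 0 := by positivity
  have hq0 : √(x + T) ≠ 0 := by positivity
  simp only [id]
  generalize √x = s at *
  generalize √(x + T) = q at *
  subst hs
  obtain rfl : T = q ^ 2 - s ^ 2 := by linarith
  field_simp
  ring

theorem continuousOn_freqGap {s : Set ℝ} (hs : ∀ x ∈ s, 0 < x) (hT : 0 ≤ T) :
    ContinuousOn (freqGap m n T) s := fun x hx =>
  (hasDerivAt_freqGap (hs x hx) (by linarith [hs x hx])).continuousAt.continuousWithinAt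

theorem hasDerivAt_sqrt_div_freqGap (hx : 0 < x) (hxT : 0 < x + T) (hD : freqGap m n T x ≠ 0) :
    HasDerivAt (fun y => √y / freqGap m n T y) (1 / (√x * freqGap m n T x)
      - √n / √(x + T) * T / (2 * √x * (x + T) * freqGap m n T x ^ 2)) x := by
  refine ((Real.hasDerivAt_sqrt hx.ne').div (hasDerivAt_freqGap hx hxT) hD).congr_deriv ?_
  unfold freqGap at *
  have hs := Real.sq_sqrt hx.le
  have hq := Real.sq_sqrt hxT.le
  have hs0 : √x ≠ 0 := by positivity
  have hq0 : √(x + T) ≠ 0 := by positivity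
  generalize √x = s at *
  generalize √(x + T) = q at *
  subst hs
  obtain rfl : T = q ^ 2 - s ^ 2 := by linarith
  field_simp
  ring

theorem continuousOn_deriv_sqrt_div_freqGap {s : Set ℝ} (hs : ∀ x ∈ s, 0 < x) (hT : 0 ≤ T)
    (hD : ∀ x ∈ s, freqGap m n T x ≠ 0) :
    ContinuousOn (fun x => 1 / (√x * freqGap m n T x)
      - √n / √(x + T) * T / (2 * √x * (x + T) * freqGap m n T x ^ 2)) s := by
  have hDc := continuousOn_freqGap (m := m) (n := n) hs hT
  fun_prop (disch := intro x hx; have := hs x hx; have := hD x hx; positivity)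

theorem div_le_freqGap (hm : 0 ≤ m) (hmn : m + 1 ≤ n) (hT : 0 ≤ T) (hx : 0 < x)
    (hTx : T ≤ x) (hmTx : 2 * m * T ≤ x) :
    (n - m) / (8 * √n * √x) ≤ freqGap m n T x := by
  have hn : 0 < n := by linarith
  have hxT : 0 < x + T := by linarith
  have hA : √m / √x ≤ √n / √x := by gcongr; linarith
  have hB : √n / √(x + T) ≤ √n / √x := by gcongr; linarith
  set A := √m / √x
  set B := √n / √(x + T)
  have hsq : (n - m) / (4 * x) ≤ B ^ 2 - A ^ 2 := by
    rw [div_pow, div_pow, Real.sq_sqrt hm, Real.sq_sqrt hn.le, Real.sq_sqrt hx.le,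
      Real.sq_sqrt hxT.le, div_sub_div _ _ hxT.ne' hx.ne', div_le_div_iff₀ (by positivity)
      (by positivity)]
    have : 0 ≤ n - m := by linarith
    nlinarith [mul_le_mul_of_nonneg_left hmTx (by linarith : (0:ℝ) ≤ 4 * x),
      mul_le_mul_of_nonneg_left hTx (mul_nonneg this hx.le),
      mul_le_mul_of_nonneg_left hmn (by positivity : (0:ℝ) ≤ x * x)]
  have hAB : 0 < B - A := by
    have : 0 < (B - A) * (B + A) :=
      calc 0 < (n - m) / (4 * x) := div_pos (by linarith) (by positivity)
        _ ≤ _ := hsq.trans_eq (by ring)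
    exact pos_of_mul_pos_left this (by positivity)
  have hgap : (n - m) / (4 * x) ≤ (B - A) * (2 * √n / √x) :=
    calc (n - m) / (4 * x) ≤ (B - A) * (B + A) := hsq.trans_eq (by ring)
      _ ≤ (B - A) * (2 * √n / √x) := by
          gcongr; linarith [show 2 * √n / √x = √n / √x + √n / √x by ring]
  rw [div_le_iff₀ (by positivity)]
  calc n - m = (n - m) / (4 * x) * (4 * x) := by field_simp
    _ ≤ (B - A) * (2 * √n / √x) * (4 * x) := by gcongr
    _ = (B - A) * (8 * √n * √x) := by field_simp; rw [Real.sq_sqrt hx.le]; ring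

theorem abs_sqrt_div_freqGap_le (hm : 0 ≤ m) (hmn : m + 1 ≤ n) (hT : 0 ≤ T) (hx : 0 < x)
    (hTx : T ≤ x) (hmTx : 2 * m * T ≤ x) :
    |√x / freqGap m n T x| ≤ 8 * √n * x / (n - m) := by
  have hD := div_le_freqGap hm hmn hT hx hTx hmTx
  have hn : 0 < n := by linarith
  have hδ : 0 < (n - m) / (8 * √n * √x) := div_pos (by linarith) (by positivity)
  calc |√x / freqGap m n T x| = √x / freqGap m n T x :=
        abs_of_nonneg (div_nonneg (Real.sqrt_nonneg x) (hδ.le.trans hD))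
    _ ≤ √x / ((n - m) / (8 * √n * √x)) := by gcongr
    _ = 8 * √n * x / (n - m) := by
        rw [div_div_eq_mul_div, mul_comm, mul_assoc, Real.mul_self_sqrt hx.le]

theorem abs_deriv_sqrt_div_freqGap_le (hm : 0 ≤ m) (hmn : m + 1 ≤ n) (hT : 0 ≤ T) (hx : 0 < x)
    (hTx : T ≤ x) (hmTx : 2 * m * T ≤ x) :
    |1 / (√x * freqGap m n T x) - √n / √(x + T) * T / (2 * √x * (x + T) * freqGap m n T x ^ 2)|
      ≤ 56 * √n / (n - m) := by
  have hD := div_le_freqGap hm hmn hT hx hTx hmTx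
  have hnm : 0 < n - m := by linarith
  have hn : 0 < n := by linarith
  have hnT : n * T ≤ 3 / 2 * (n - m) * x := by nlinarith
  have hδ : 0 < (n - m) / (8 * √n * √x) := div_pos hnm (by positivity)
  have hDpos : 0 < freqGap m n T x := hδ.trans_le hD
  have h₁ : 1 / (√x * freqGap m n T x) ≤ 8 * √n / (n - m) :=
    calc 1 / (√x * freqGap m n T x) ≤ 1 / (√x * ((n - m) / (8 * √n * √x))) := by gcongr
      _ = 8 * √n / (n - m) := by field_simp
  have h₂ : √n / √(x + T) * T / (2 * √x * (x + T) * freqGap m n T x ^ 2)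
      ≤ 48 * √n / (n - m) :=
    calc _ ≤ √n / √x * T / (2 * √x * x * ((n - m) / (8 * √n * √x)) ^ 2) := by
          gcongr <;> linarith
      _ = 32 * (n * T) * √n / (x * (n - m) ^ 2) := by
          field_simp
          rw [Real.sq_sqrt hn.le]
          ring
      _ ≤ 32 * (3 / 2 * (n - m) * x) * √n / (x * (n - m) ^ 2) := by gcongr 32 * ?_ * √n / _
      _ = 48 * √n / (n - m) := by field_simp; ring
  calc _ ≤ |1 / (√x * freqGap m n T x)|
        + |√n / √(x + T) * T / (2 * √x * (x + T) * freqGap m n T x ^ 2)| := abs_sub _ _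
    _ ≤ 8 * √n / (n - m) + 48 * √n / (n - m) := by
        rw [abs_of_nonneg (by positivity), abs_of_nonneg (by positivity)]
        exact add_le_add h₁ h₂
    _ = 56 * √n / (n - m) := by ring

theorem norm_integral_sqrt_mul_exp_le (hm : 0 ≤ m) (hmn : m + 1 ≤ n) (hT : 0 ≤ T) {a b c : ℝ}
    (hc : c ≠ 0) (ha : 0 < a) (hab : a ≤ b) (hTa : T ≤ a) (hmTa : 2 * m * T ≤ a) :
    ‖∫ x in a..b, (√x : ℂ) * exp ((c * (2 * √(m * x) - 2 * √(n * (x + T))) : ℝ) * I)‖ ≤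
      (8 * √n * a + 8 * √n * b + 56 * √n * (b - a)) / ((n - m) * |c|) := by
  have hn : 0 < n := by linarith
  have hx : ∀ x ∈ uIcc a b, 0 < x ∧ T ≤ x ∧ 2 * m * T ≤ x := fun x hx => by
    rw [uIcc_of_le hab] at hx
    exact ⟨ha.trans_le hx.1, hTa.trans hx.1, hmTa.trans hx.1⟩
  have hD : ∀ x ∈ uIcc a b, 0 < freqGap m n T x := fun x hx' => by
    obtain ⟨hx0, hTx, hmTx⟩ := hx x hx'
    exact (div_pos (by linarith) (by positivity)).trans_le
      (div_le_freqGap hm hmn hT hx0 hTx hmTx)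
  have hbound := norm_integral_mul_exp_mul_I_le_of_eq_mul_deriv (g := Real.sqrt)
    (h := fun x => -(√x / freqGap m n T x) / c)
    (h' := fun x => -(1 / (√x * freqGap m n T x)
      - √n / √(x + T) * T / (2 * √x * (x + T) * freqGap m n T x ^ 2)) / c)
    (φ' := fun x => c * -freqGap m n T x)
    (K := 56 * √n / (n - m) / |c|)
    (fun x hx' => ((hasDerivAt_sqrt_div_freqGap (hx x hx').1 (by linarith [(hx x hx').1])
      (hD x hx').ne').neg.div_const c))
    (fun x hx' => (hasDerivAt_two_sqrt_mul_sub_two_sqrt_mul hm hn.le (hx x hx').1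
      (by linarith [(hx x hx').1])).const_mul c)
    ((continuousOn_deriv_sqrt_div_freqGap (fun x hx' => (hx x hx').1) hT
      (fun x hx' => (hD x hx').ne')).neg.div_const c)
    (continuousOn_const.mul (continuousOn_freqGap (fun x hx' => (hx x hx').1) hT).neg)
    (fun x hx' => by field_simp [(hD x hx').ne'])
    (fun x hx' => by
      obtain ⟨hx0, hTx, hmTx⟩ := hx x hx'
      rw [abs_div, abs_neg]
      gcongr
      exact abs_deriv_sqrt_div_freqGap_le hm hmn hT hx0 hTx hmTx)
  have hend : ∀ x ∈ uIcc a b, |-(√x / freqGap m n T x) / c| ≤ 8 * √n * x / (n - m) / |c| :=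
    fun x hx' => by
      obtain ⟨hx0, hTx, hmTx⟩ := hx x hx'
      rw [abs_div, abs_neg]
      gcongr
      exact abs_sqrt_div_freqGap_le hm hmn hT hx0 hTx hmTx
  refine hbound.trans ?_
  calc _ ≤ 8 * √n * a / (n - m) / |c| + 8 * √n * b / (n - m) / |c|
        + 56 * √n / (n - m) / |c| * (b - a) := by
        rw [abs_of_nonneg (sub_nonneg.2 hab)]
        gcongr
        · exact hend a left_mem_uIcc
        · exact hend b right_mem_uIcc
    _ = _ := by field_simp

end freqGap

theorem mean_square_lemma_three :
    ∃ C : ℝ, 0 < C ∧ ∀ M T Ξ : ℝ, 1 ≤ M → 0 < T → T ≤ Real.sqrt M →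
      0 ≤ Ξ → Ξ ≤ M → ∀ m n k : ℕ, 0 < m → 0 < n → 0 < k → m < n → (m : ℝ) ≤ M / (2 * T) →
      ∀ s : ℝ, s = 1 ∨ s = -1 →
        ‖∫ x in M..(M + Ξ), ((x ^ ((1:ℝ)/2) : ℝ) : ℂ) *
            e (s * (2 * Real.sqrt (m * x) / k - 2 * Real.sqrt (n * (x + T)) / k))‖ ≤
          C * k * Real.sqrt n * M / ((n : ℝ) - (m : ℝ)) := by
  refine ⟨14, by norm_num, fun M T Ξ hM hT hTM hΞ hΞM m n k _ _ hk hmn hmM s hs => ?_⟩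
  have hk' : (0 : ℝ) < k := by exact_mod_cast hk
  have hmn' : (m : ℝ) + 1 ≤ n := by exact_mod_cast hmn
  have hTM' : T ≤ M := hTM.trans ((Real.sqrt_le_left (by linarith)).2 (by nlinarith))
  have hmT : 2 * m * T ≤ M := by linarith [(le_div_iff₀ (by positivity)).1 hmM]
  set c := 2 * Real.pi * s / k
  have hc : |c| = 2 * Real.pi / k := by
    rw [abs_div, abs_mul, abs_of_pos Real.two_pi_pos, abs_of_pos hk',
      show |s| = 1 by rcases hs with rfl | rfl <;> norm_num, mul_one]
  rw [integral_congr (g := fun x =>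
      (√x : ℂ) * exp ((c * (2 * √(m * x) - 2 * √(n * (x + T))) : ℝ) * I))
    fun x _ => by simp only [← Real.sqrt_eq_rpow, e, c]; push_cast; ring_nf]
  refine (norm_integral_sqrt_mul_exp_le (Nat.cast_nonneg m) hmn' hT.le
    (by rw [← abs_ne_zero, hc]; positivity) (by linarith) (by linarith) hTM' hmT).trans ?_
  rw [hc]
  have hnm : (0 : ℝ) < n - m := by linarith
  calc _ = k * √n / (n - m) * ((16 * M + 64 * Ξ) / (2 * Real.pi)) := by field_simp; ring
    _ ≤ k * √n / (n - m) * (14 * M) := by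
        gcongr
        rw [div_le_iff₀ Real.two_pi_pos]
        nlinarith [Real.pi_gt_three]
    _ = 14 * k * √n * M / (n - m) := by ring
end

section
/- There is an absolute constant c > 0 such that for all positive integers a, b, c′, d with a ≤ c′, b ≤ c′ and, for a fixed choice of sign ±, √a + √b ± √c′ ≠ √d, one has |√a + √b ± √c′ − √d| ≥ c·(c′)^{−2}·(a·b·c′)^{−1/2}. -/
private lemma sqrt_aux_factor (α β g δ A B C D : ℝ)
    (hA : A = α^2) (hB : B = β^2) (hC : C = g^2) (hD : D = δ^2) :
    (α+β+g-δ)*(α+β+g+δ)*((α-β+g-δ)*(α-β+g+δ))*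
      ((-α+β+g-δ)*(-α+β+g+δ)*((-α-β+g-δ)*(-α-β+g+δ)))
    = D^4 - 4*C*D^3 + 6*C^2*D^2 - 4*C^3*D + C^4 - 4*B*D^3 + 4*B*C*D^2 + 4*B*C^2*D
      - 4*B*C^3 + 6*B^2*D^2 + 4*B^2*C*D + 6*B^2*C^2 - 4*B^3*D - 4*B^3*C + B^4
      - 4*A*D^3 + 4*A*C*D^2 + 4*A*C^2*D - 4*A*C^3 + 4*A*B*D^2 - 40*A*B*C*D
      + 4*A*B*C^2 + 4*A*B^2*D + 4*A*B^2*C - 4*A*B^3 + 6*A^2*D^2 + 4*A^2*C*D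
      + 6*A^2*C^2 + 4*A^2*B*D + 4*A^2*B*C + 6*A^2*B^2 - 4*A^3*D - 4*A^3*C
      - 4*A^3*B + A^4 := by
  subst hA hB hC hD; ring

private lemma sqrt_aux_factor2 (α β δ A B D : ℝ)
    (hA : A = α^2) (hB : B = β^2) (hD : D = δ^2) :
    (α+β-δ)*(α+β+δ)*((α-β-δ)*(α-β+δ))
    = A^2+B^2+D^2-2*A*B-2*A*D-2*B*D := by
  subst hA hB hD; ring

set_option maxHeartbeats 4000000 in
theorem square_root_spacing_lower_bound :
    ∃ c : ℝ, 0 < c ∧ ∀ a b c' d : ℕ, 0 < a → 0 < b → 0 < c' → 0 < d → a ≤ c' → b ≤ c' →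
      ∀ s : ℝ, s = 1 ∨ s = -1 →
        Real.sqrt a + Real.sqrt b + s * Real.sqrt c' ≠ Real.sqrt d →
        c * (c' : ℝ) ^ (-(2:ℝ)) * ((a * b * c' : ℕ) : ℝ) ^ (-(1:ℝ)/2) ≤
          |Real.sqrt a + Real.sqrt b + s * Real.sqrt c' - Real.sqrt d| := by
  refine ⟨1/1000000, by norm_num, ?_⟩
  intro a b c' d ha hb hc hd hac hbc s hs hne
  have one_le_sqrt : ∀ n : ℕ, 1 ≤ n → 1 ≤ Real.sqrt n := by
    intro n hn
    rw [← Real.sqrt_one]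
    exact Real.sqrt_le_sqrt (by exact_mod_cast hn)
  set α := Real.sqrt (a : ℝ) with hαdef
  set β := Real.sqrt (b : ℝ) with hβdef
  set γ := Real.sqrt (c' : ℝ) with hγdef
  set δ := Real.sqrt (d : ℝ) with hδdef
  have hA : (a:ℝ) = α^2 := (Real.sq_sqrt (Nat.cast_nonneg a)).symm
  have hB : (b:ℝ) = β^2 := (Real.sq_sqrt (Nat.cast_nonneg b)).symm
  have hC0 : (c':ℝ) = γ^2 := (Real.sq_sqrt (Nat.cast_nonneg c')).symm
  have hD : (d:ℝ) = δ^2 := (Real.sq_sqrt (Nat.cast_nonneg d)).symm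
  have hα1 : 1 ≤ α := one_le_sqrt a ha
  have hβ1 : 1 ≤ β := one_le_sqrt b hb
  have hγ1 : 1 ≤ γ := one_le_sqrt c' hc
  have hδ1 : 1 ≤ δ := one_le_sqrt d hd
  have hαγ : α ≤ γ := Real.sqrt_le_sqrt (by exact_mod_cast hac)
  have hβγ : β ≤ γ := Real.sqrt_le_sqrt (by exact_mod_cast hbc)
  have hsabs : |s| = 1 := by rcases hs with rfl | rfl <;> norm_num
  have hs2 : s^2 = 1 := by rcases hs with rfl | rfl <;> norm_num
  set g := s * γ with hgdef
  have hgabs : |g| = γ := by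
    rw [hgdef, abs_mul, hsabs, one_mul, abs_of_nonneg (by linarith : (0:ℝ) ≤ γ)]
  have hg_le : g ≤ γ := hgabs ▸ le_abs_self g
  have hg_ge : -γ ≤ g := by
    have := neg_abs_le g; rwa [hgabs] at this
  have hC : (c':ℝ) = g^2 := by
    rw [hgdef, mul_pow, hs2, one_mul]; exact hC0
  set x := α + β + g - δ with hxdef
  have hx0 : x ≠ 0 := sub_ne_zero_of_ne hne
  -- rewrite the goal's RHS constant expression
  have hgoal_eq : (1/1000000 : ℝ) * (c' : ℝ) ^ (-(2:ℝ)) * ((a * b * c' : ℕ) : ℝ) ^ (-(1:ℝ)/2)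
      = 1/1000000 * (γ^4)⁻¹ * (α*β*γ)⁻¹ := by
    have h1 : (c' : ℝ) ^ (-(2:ℝ)) = (γ^4)⁻¹ := by
      rw [Real.rpow_neg (Nat.cast_nonneg c'),
        show ((2:ℝ)) = ((2:ℕ):ℝ) by norm_num, Real.rpow_natCast]
      rw [hC0]; ring_nf
    have habc : ((a * b * c' : ℕ) : ℝ) = (a:ℝ) * (b:ℝ) * (c':ℝ) := by push_cast; ring
    have hsq : Real.sqrt ((a:ℝ) * (b:ℝ) * (c':ℝ)) = α * β * γ := by
      rw [Real.sqrt_mul (by positivity), Real.sqrt_mul (by positivity)]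
    have h2 : ((a * b * c' : ℕ) : ℝ) ^ (-(1:ℝ)/2) = (α*β*γ)⁻¹ := by
      rw [habc, show (-(1:ℝ)/2) = -(1/2 : ℝ) by norm_num,
        Real.rpow_neg (by positivity), ← Real.sqrt_eq_rpow, hsq]
    rw [h1, h2]
  rw [hgoal_eq]
  have h_ab : (1:ℝ) ≤ α*β := by nlinarith
  have hg4 : (1:ℝ) ≤ γ^4 := one_le_pow₀ hγ1
  have hg2 : (1:ℝ) ≤ γ^2 := one_le_pow₀ hγ1
  have hbig : (1:ℝ) ≤ α*β*γ^4 := by nlinarith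
  have hbig2 : (1:ℝ) ≤ α*β*γ^2 := by nlinarith
  have hbase : γ ≤ γ^4*(α*β*γ) := by
    have := mul_le_mul_of_nonneg_right hbig (show (0:ℝ) ≤ γ by linarith)
    nlinarith
  have hbase3 : γ^3 ≤ γ^4*(α*β*γ) := by
    have := mul_le_mul_of_nonneg_right hbig2 (show (0:ℝ) ≤ γ^3 by positivity)
    nlinarith
  have hE5 : 5*γ ≤ 1000000*(γ^4*(α*β*γ)) := by nlinarith
  have hE108 : 108*γ^3 ≤ 1000000*(γ^4*(α*β*γ)) := by nlinarith
  have hE108045 : 108045*(α*β*γ^5) ≤ 1000000*(γ^4*(α*β*γ)) := by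
    have hpos : (0:ℝ) ≤ α*β*γ^5 := by positivity
    nlinarith
  -- helper to conclude
  have final : ∀ E : ℝ, E ≤ 1000000 * (γ^4 * (α*β*γ)) → 1 ≤ |x| * E →
      1/1000000 * (γ^4)⁻¹ * (α*β*γ)⁻¹ ≤ |x| := by
    intro E hE h1
    have hG : (0:ℝ) < 1000000 * (γ^4 * (α*β*γ)) := by positivity
    have h2 : 1 ≤ |x| * (1000000 * (γ^4 * (α*β*γ))) :=
      h1.trans (mul_le_mul_of_nonneg_left hE (abs_nonneg x))
    have h3 : 1 / (1000000 * (γ^4 * (α*β*γ))) ≤ |x| := by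
      rw [div_le_iff₀ hG]; linarith
    calc 1/1000000 * (γ^4)⁻¹ * (α*β*γ)⁻¹
        = 1 / (1000000 * (γ^4 * (α*β*γ))) := by
          field_simp
      _ ≤ |x| := h3
  by_cases hcase : 1 ≤ |x|
  · have e1 : (γ^4:ℝ)⁻¹ ≤ 1 := inv_le_one_of_one_le₀ hg4
    have e2 : ((α*β*γ:ℝ))⁻¹ ≤ 1 := inv_le_one_of_one_le₀ (by
      have := mul_le_mul_of_nonneg_right h_ab (show (0:ℝ) ≤ γ by linarith)
      linarith)
    have e3 : (0:ℝ) ≤ (γ^4)⁻¹ := by positivity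
    have e4 : (0:ℝ) ≤ (α*β*γ)⁻¹ := by positivity
    have t2 : 1/1000000 * (γ^4)⁻¹ * (α*β*γ)⁻¹ ≤ 1/1000000 * 1 * 1 :=
      mul_le_mul (mul_le_mul_of_nonneg_left e1 (by norm_num)) e2 e4 (by norm_num)
    linarith
  push_neg at hcase
  obtain ⟨hx_ge, hx_le⟩ := abs_lt.mp hcase
  have hδ4 : δ ≤ 4*γ := by
    have : x = α + β + g - δ := hxdef
    linarith
  -- the integer n
  set A := (a:ℤ) with hAdef
  set B := (b:ℤ) with hBdef
  set C := (c':ℤ) with hCdef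
  set D := (d:ℤ) with hDdef
  set n : ℤ := D^4 - 4*C*D^3 + 6*C^2*D^2 - 4*C^3*D + C^4 - 4*B*D^3 + 4*B*C*D^2 + 4*B*C^2*D
      - 4*B*C^3 + 6*B^2*D^2 + 4*B^2*C*D + 6*B^2*C^2 - 4*B^3*D - 4*B^3*C + B^4
      - 4*A*D^3 + 4*A*C*D^2 + 4*A*C^2*D - 4*A*C^3 + 4*A*B*D^2 - 40*A*B*C*D
      + 4*A*B*C^2 + 4*A*B^2*D + 4*A*B^2*C - 4*A*B^3 + 6*A^2*D^2 + 4*A^2*C*D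
      + 6*A^2*C^2 + 4*A^2*B*D + 4*A^2*B*C + 6*A^2*B^2 - 4*A^3*D - 4*A^3*C
      - 4*A^3*B + A^4 with hndef
  have hPint : x * (α+β+g+δ) * ((x-2*β)*(α-β+g+δ)) *
      ((x-2*α)*(-α+β+g+δ) * ((x-2*α-2*β)*(-α-β+g+δ))) = ((n:ℤ):ℝ) := by
    have haux := sqrt_aux_factor α β g δ ((a:ℝ)) ((b:ℝ)) ((c':ℝ)) ((d:ℝ)) hA hB hC hD
    rw [hxdef, hndef, hAdef, hBdef, hCdef, hDdef]
    push_cast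
    linear_combination haux
  by_cases hP0 : x * (α+β+g+δ) * ((x-2*β)*(α-β+g+δ)) *
      ((x-2*α)*(-α+β+g+δ) * ((x-2*α-2*β)*(-α-β+g+δ))) = 0
  · -- some factor vanishes
    rcases mul_eq_zero.mp hP0 with h | h
    · rcases mul_eq_zero.mp h with h | h
      · rcases mul_eq_zero.mp h with h | h
        · exact absurd h hx0
        · -- α+β+g+δ = 0 : x = -2δ, |x| ≥ 2, contradiction
          exfalso; linarith
      · rcases mul_eq_zero.mp h with h | h
        · -- x = 2β ≥ 2 contradiction
          exfalso; linarith
        · -- α-β+g+δ = 0 : x = 2β-2δ, b ≠ d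
          have hxeq : x = 2*β - 2*δ := by rw [hxdef]; linarith
          have hbd : b ≠ d := by
            rintro rfl
            have : β = δ := by rw [hβdef, hδdef]
            exact hx0 (by rw [hxeq, this]; ring)
          have hint : (1:ℝ) ≤ |(b:ℝ) - (d:ℝ)| := by
            have h1 : (b:ℤ) - (d:ℤ) ≠ 0 := by
              simp only [sub_ne_zero]; exact_mod_cast hbd
            have := Int.one_le_abs h1
            have h2 : ((1:ℤ):ℝ) ≤ ((|(b:ℤ) - (d:ℤ)|:ℤ):ℝ) := by exact_mod_cast this
            push_cast at h2
            exact h2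
          have h2 : |x| = 2*|β-δ| := by
            rw [hxeq, show 2*β-2*δ = 2*(β-δ) by ring, abs_mul]
            norm_num
          have h3 : |β-δ| * (β+δ) = |(b:ℝ) - (d:ℝ)| := by
            rw [← abs_of_nonneg (show (0:ℝ) ≤ β+δ by linarith), ← abs_mul]
            congr 1
            linear_combination -hB + hD
          have h5 : |x| * (β+δ) = 2*|(b:ℝ)-(d:ℝ)| := by
            rw [h2]; linear_combination 2*h3
          have h4 : |x| * (β+δ) ≤ |x| * (5*γ) :=
            mul_le_mul_of_nonneg_left (by linarith) (abs_nonneg x)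
          exact final (5*γ) hE5 (by linarith)
    · rcases mul_eq_zero.mp h with h | h
      · rcases mul_eq_zero.mp h with h | h
        · -- x = 2α contradiction
          exfalso; linarith
        · -- -α+β+g+δ = 0 : x = 2α-2δ, a ≠ d
          have hxeq : x = 2*α - 2*δ := by rw [hxdef]; linarith
          have hbd : a ≠ d := by
            rintro rfl
            have : α = δ := by rw [hαdef, hδdef]
            exact hx0 (by rw [hxeq, this]; ring)
          have hint : (1:ℝ) ≤ |(a:ℝ) - (d:ℝ)| := by
            have h1 : (a:ℤ) - (d:ℤ) ≠ 0 := by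
              simp only [sub_ne_zero]; exact_mod_cast hbd
            have := Int.one_le_abs h1
            have h2 : ((1:ℤ):ℝ) ≤ ((|(a:ℤ) - (d:ℤ)|:ℤ):ℝ) := by exact_mod_cast this
            push_cast at h2
            exact h2
          have h2 : |x| = 2*|α-δ| := by
            rw [hxeq, show 2*α-2*δ = 2*(α-δ) by ring, abs_mul]
            norm_num
          have h3 : |α-δ| * (α+δ) = |(a:ℝ) - (d:ℝ)| := by
            rw [← abs_of_nonneg (show (0:ℝ) ≤ α+δ by linarith), ← abs_mul]
            congr 1
            linear_combination -hA + hD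
          have h5 : |x| * (α+δ) = 2*|(a:ℝ)-(d:ℝ)| := by
            rw [h2]; linear_combination 2*h3
          have h4 : |x| * (α+δ) ≤ |x| * (5*γ) :=
            mul_le_mul_of_nonneg_left (by linarith) (abs_nonneg x)
          exact final (5*γ) hE5 (by linarith)
      · rcases mul_eq_zero.mp h with h | h
        · -- x = 2α+2β contradiction
          exfalso; linarith
        · -- -α-β+g+δ = 0 : the three-term case x = 2(α+β-δ)
          set y := α + β - δ with hydef
          have hxy : x = 2*y := by rw [hxdef, hydef]; linarith
          have hy0 : y ≠ 0 := by
            intro h0; exact hx0 (by rw [hxy, h0]; ring)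
          set m : ℤ := A^2+B^2+D^2-2*A*B-2*A*D-2*B*D with hmdef
          have hQint : y * (α+β+δ) * ((α-β-δ)*(α-β+δ)) = ((m:ℤ):ℝ) := by
            have haux := sqrt_aux_factor2 α β δ ((a:ℝ)) ((b:ℝ)) ((d:ℝ)) hA hB hD
            rw [hydef, hmdef, hAdef, hBdef, hDdef]
            push_cast
            linear_combination haux
          by_cases hQ0 : y * (α+β+δ) * ((α-β-δ)*(α-β+δ)) = 0
          · rcases mul_eq_zero.mp hQ0 with h' | h'
            · rcases mul_eq_zero.mp h' with h' | h'
              · exact absurd h' hy0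
              · exfalso; linarith
            · rcases mul_eq_zero.mp h' with h' | h'
              · -- α-β-δ = 0 → x = 4β ≥ 4 contradiction
                exfalso
                have : y = 2*β := by rw [hydef]; linarith
                rw [this] at hxy
                linarith
              · exfalso
                have : y = 2*α := by rw [hydef]; linarith
                rw [this] at hxy
                linarith
          · have hm0 : m ≠ 0 := by
              intro h0; apply hQ0; rw [hQint, h0]; simp
            have hm1 : (1:ℝ) ≤ |((m:ℤ):ℝ)| := by
              have := Int.one_le_abs hm0
              exact_mod_cast this
            have e1 : |α+β+δ| ≤ 6*γ := abs_le.mpr ⟨by linarith, by linarith⟩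
            have e2 : |α-β-δ| ≤ 6*γ := abs_le.mpr ⟨by linarith, by linarith⟩
            have e3 : |α-β+δ| ≤ 6*γ := abs_le.mpr ⟨by linarith, by linarith⟩
            have hQle : |y * (α+β+δ) * ((α-β-δ)*(α-β+δ))| ≤ |y| * (216*γ^3) := by
              calc |y * (α+β+δ) * ((α-β-δ)*(α-β+δ))|
                  = |y| * |α+β+δ| * (|α-β-δ| * |α-β+δ|) := by
                    simp only [abs_mul]
                _ ≤ |y| * (6*γ) * ((6*γ) * (6*γ)) := by
                    gcongr <;> first | assumption | positivity
                _ = |y| * (216*γ^3) := by ring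
            have hyx : |y| = |x| / 2 := by
              rw [hxy, abs_mul]; norm_num
            rw [hQint, hyx] at hQle
            have h1 : 1 ≤ |x| * (108*γ^3) := by linarith
            exact final (108*γ^3) hE108 h1
  · -- main case : the 8-fold product is a nonzero integer
    have hn0 : n ≠ 0 := by
      intro h0; apply hP0; rw [hPint, h0]; simp
    have hm1 : (1:ℝ) ≤ |((n:ℤ):ℝ)| := by
      have := Int.one_le_abs hn0
      exact_mod_cast this
    have e2 : |α+β+g+δ| ≤ 7*γ := abs_le.mpr ⟨by linarith, by linarith⟩
    have e3 : |x-2*β| ≤ 3*β := abs_le.mpr ⟨by linarith, by linarith⟩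
    have e4 : |α-β+g+δ| ≤ 7*γ := abs_le.mpr ⟨by linarith, by linarith⟩
    have e5 : |x-2*α| ≤ 3*α := abs_le.mpr ⟨by linarith, by linarith⟩
    have e6 : |-α+β+g+δ| ≤ 7*γ := abs_le.mpr ⟨by linarith, by linarith⟩
    have e7 : |x-2*α-2*β| ≤ 5*γ := abs_le.mpr ⟨by linarith, by linarith⟩
    have e8 : |-α-β+g+δ| ≤ 7*γ := abs_le.mpr ⟨by linarith, by linarith⟩
    have hPle : |x * (α+β+g+δ) * ((x-2*β)*(α-β+g+δ)) *
        ((x-2*α)*(-α+β+g+δ) * ((x-2*α-2*β)*(-α-β+g+δ)))|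
        ≤ |x| * (108045*(α*β*γ^5)) := by
      calc |x * (α+β+g+δ) * ((x-2*β)*(α-β+g+δ)) *
          ((x-2*α)*(-α+β+g+δ) * ((x-2*α-2*β)*(-α-β+g+δ)))|
          = |x| * |α+β+g+δ| * (|x-2*β| * |α-β+g+δ|) *
            (|x-2*α| * |-α+β+g+δ| * (|x-2*α-2*β| * |-α-β+g+δ|)) := by
            simp only [abs_mul]
        _ ≤ |x| * (7*γ) * ((3*β) * (7*γ)) * ((3*α) * (7*γ) * ((5*γ) * (7*γ))) := by
            gcongr <;> first | assumption | positivity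
        _ = |x| * (108045*(α*β*γ^5)) := by ring
    have h1 : 1 ≤ |x| * (108045*(α*β*γ^5)) := by
      rw [hPint] at hPle
      linarith
    exact final (108045*(α*β*γ^5)) hE108045 h1
end
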